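/- The clique number ω, assigning to each finite simple graph G the largest n such that there is an injective graph homomorphism K_n → G, is an S-functor over Graph_mono: ω is monotone along injective graph homomorphisms, ω(K_n) = n for every n, and ω(G #_{K_n} H) = max(ω(G), ω(H)) for every clique sum along a complete graph. Consequently, Graph_mono is a measurable spined category. -/

import Mathlib

open CategoryTheory

universe u v

/-- The data of a spine and proxy pushout operation on a category. -/
structure SpineData (C : Type u) [Category.{v} C] where
  /-- the spine, a functor from the discrete category ℕ -/
  Ω : ℕ → C
  /-- proxy pushout object of a span out of a spine object -/
  P : ∀ {n : ℕ} {G H : C}, (Ω n ⟶ G) → (Ω n ⟶ H) → C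
  /-- left structure morphism of the proxy pushout cocone -/
  inl : ∀ {n : ℕ} {G H : C} (g : Ω n ⟶ G) (h : Ω n ⟶ H), G ⟶ P g h
  /-- right structure morphism of the proxy pushout cocone -/
  inr : ∀ {n : ℕ} {G H : C} (g : Ω n ⟶ G) (h : Ω n ⟶ H), H ⟶ P g h

variable {C : Type u} [Category.{v} C]

/-- (SC1): every object admits a morphism to some spine object. -/
def SpineData.SC1 (D : SpineData C) : Prop :=
  ∀ X : C, ∃ n : ℕ, Nonempty (X ⟶ D.Ω n)

/-- (SC2): unique compatibility morphisms between proxy pushouts of extended spans. -/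
def SpineData.SC2 (D : SpineData C) : Prop :=
  ∀ {n : ℕ} {G H G' H' : C} (g : D.Ω n ⟶ G) (h : D.Ω n ⟶ H) (g' : G ⟶ G') (h' : H ⟶ H'),
    ∃! m : D.P g h ⟶ D.P (g ≫ g') (h ≫ h'),
      D.inl g h ≫ m = g' ≫ D.inl (g ≫ g') (h ≫ h') ∧
      D.inr g h ≫ m = h' ≫ D.inr (g ≫ g') (h ≫ h')

/-- A spined category is a category equipped with spine data satisfying SC1 and SC2. -/
def SpineData.IsSpined (D : SpineData C) : Prop := D.SC1 ∧ D.SC2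

/-- An S-functor over a spined category `(C, Ω, 𝔓)`: a spinal functor to the spined
category `Nat` (the poset `(ℕ, ≤)` with spine `n ↦ n` and proxy pushouts given by maxima).
Equivalently: a monotone map preserving the spine and proxy pushouts. -/
structure SFunctor (D : SpineData C) where
  val : C → ℕ
  mono : ∀ {X Y : C}, (X ⟶ Y) → val X ≤ val Y
  spine : ∀ n : ℕ, val (D.Ω n) = n
  pp : ∀ {n : ℕ} {G H : C} (g : D.Ω n ⟶ G) (h : D.Ω n ⟶ H),
    val (D.P g h) = max (val G) (val H)

/-- An object is pseudo-chordal if all S-functors agree on it. -/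
def PseudoChordal (D : SpineData C) (X : C) : Prop :=
  ∀ F G : SFunctor D, F.val X = G.val X

/-- The chordal objects: the smallest collection of objects containing the spine and
closed under proxy pushouts. -/
inductive Chordal (D : SpineData C) : C → Prop
  | spine (n : ℕ) : Chordal D (D.Ω n)
  | push {n : ℕ} {A B : C} (a : D.Ω n ⟶ A) (b : D.Ω n ⟶ B) :
      Chordal D A → Chordal D B → Chordal D (D.P a b)

/-- The set of widths of pseudo-chordal completions of `X`: `k` is such a width
iff there is a morphism `X ⟶ H` with `H` pseudo-chordal and every S-functor takes
the value `k` on `H`. -/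
def pcWidths (D : SpineData C) (X : C) : Set ℕ :=
  {k | ∃ H : C, Nonempty (X ⟶ H) ∧ PseudoChordal D H ∧ ∀ F : SFunctor D, F.val H = k}

/-- The set of widths of chordal completions of `X`. -/
def chWidths (D : SpineData C) (X : C) : Set ℕ :=
  {k | ∃ H : C, Nonempty (X ⟶ H) ∧ Chordal D H ∧ ∀ F : SFunctor D, F.val H = k}

/-- The triangulation number: minimum width of a pseudo-chordal completion. -/
noncomputable def tri (D : SpineData C) (X : C) : ℕ := sInf (pcWidths D X)

/-- The chordal triangulation number: minimum width of a chordal completion. -/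
noncomputable def triCh (D : SpineData C) (X : C) : ℕ := sInf (chWidths D X)

/-- The order of an object: least `n` admitting a morphism `X ⟶ Ω n`. -/
noncomputable def ordOf (D : SpineData C) (X : C) : ℕ := sInf {n : ℕ | Nonempty (X ⟶ D.Ω n)}

/-- A finite simple graph: a finite vertex type together with a simple graph on it. -/
structure FinGraph : Type 1 where
  V : Type
  [fin : Finite V]
  G : SimpleGraph V

attribute [instance] FinGraph.fin

namespace Glue

variable {S A B : FinGraph} (g : S.G →g A.G) (h : S.G →g B.G)

/-- The identification relation of the `S`-sum: `inl (g s)` is glued to `inr (h s)`. -/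
def rel : (A.V ⊕ B.V) → (A.V ⊕ B.V) → Prop :=
  fun x y => ∃ s : S.V, x = Sum.inl (g s) ∧ y = Sum.inr (h s)

/-- Vertices of the `S`-sum: the disjoint union with `g s` and `h s` identified. -/
def GV := Quot (rel g h)

instance : Finite (GV g h) :=
  Finite.of_surjective (Quot.mk (rel g h)) fun q => Quot.inductionOn q fun x => ⟨x, rfl⟩

/-- Left injection on vertices. -/
def mkl (a : A.V) : GV g h := Quot.mk _ (Sum.inl a)

/-- Right injection on vertices. -/
def mkr (b : B.V) : GV g h := Quot.mk _ (Sum.inr b)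

/-- Adjacency in the `S`-sum: edges coming from `A` or from `B` (with loops and
parallel edges removed by the quotient and the `x ≠ y` condition). -/
def adj (x y : GV g h) : Prop :=
  x ≠ y ∧ ((∃ a b, A.G.Adj a b ∧ x = mkl g h a ∧ y = mkl g h b) ∨
           (∃ a b, B.G.Adj a b ∧ x = mkr g h a ∧ y = mkr g h b))

/-- The `S`-sum graph `A #_S B`. -/
def graph : SimpleGraph (GV g h) where
  Adj := adj g h
  symm := ⟨by
    rintro x y ⟨hne, hc⟩
    refine ⟨hne.symm, ?_⟩
    rcases hc with ⟨a, b, hab, hx, hy⟩ | ⟨a, b, hab, hx, hy⟩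
    · exact Or.inl ⟨b, a, hab.symm, hy, hx⟩
    · exact Or.inr ⟨b, a, hab.symm, hy, hx⟩⟩
  loopless := ⟨fun x hx => hx.1 rfl⟩

/-- The `S`-sum as a finite graph. -/
def obj : FinGraph := ⟨GV g h, graph g h⟩

open Classical in
/-- Normal form for vertices of the disjoint union modulo gluing. -/
noncomputable def norm : A.V ⊕ B.V → A.V ⊕ B.V
  | .inl a => .inl a
  | .inr b => if hb : ∃ s, h s = b then .inl (g (Classical.choose hb)) else .inr b

lemma norm_rel (hh : Function.Injective h) {x y : A.V ⊕ B.V} (hxy : rel g h x y) :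
    norm g h x = norm g h y := by
  obtain ⟨s, rfl, rfl⟩ := hxy
  have hb : ∃ t : S.V, h t = h s := ⟨s, rfl⟩
  have hc : Classical.choose hb = s := hh (Classical.choose_spec hb)
  simp only [norm, dif_pos hb, hc]

lemma norm_eqvGen (hh : Function.Injective h) {x y : A.V ⊕ B.V}
    (hxy : Relation.EqvGen (rel g h) x y) : norm g h x = norm g h y := by
  induction hxy with
  | rel _ _ hr => exact norm_rel g h hh hr
  | refl => rfl
  | symm _ _ _ ih => exact ih.symm
  | trans _ _ _ _ _ ih₁ ih₂ => exact ih₁.trans ih₂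

lemma mkl_inj (hh : Function.Injective h) : Function.Injective (mkl g h) := by
  intro a a' e
  have := norm_eqvGen g h hh (Quot.eq.1 e)
  simpa [norm] using this

lemma mkr_inj (hg : Function.Injective g) (hh : Function.Injective h) :
    Function.Injective (mkr g h) := by
  intro b b' e
  have hn := norm_eqvGen g h hh (Quot.eq.1 e)
  by_cases hb : ∃ s, h s = b <;> by_cases hb' : ∃ s, h s = b'
  · simp only [norm, dif_pos hb, dif_pos hb'] at hn
    have : Classical.choose hb = Classical.choose hb' := hg (Sum.inl.inj hn)
    rw [← Classical.choose_spec hb, ← Classical.choose_spec hb', this]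
  · simp only [norm, dif_pos hb, dif_neg hb'] at hn
    exact absurd hn (by simp)
  · simp only [norm, dif_neg hb, dif_pos hb'] at hn
    exact absurd hn (by simp)
  · simp only [norm, dif_neg hb, dif_neg hb'] at hn
    exact Sum.inr.inj hn

/-- The inclusion homomorphism `A → A #_S B`. -/
def inlHom (hg : Function.Injective g) (hh : Function.Injective h) :
    A.G →g (obj g h).G where
  toFun := mkl g h
  map_rel' := fun {a b} hab =>
    show adj g h (mkl g h a) (mkl g h b) from
    ⟨fun e => hab.ne (mkl_inj g h hh e), Or.inl ⟨a, b, hab, rfl, rfl⟩⟩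

/-- The inclusion homomorphism `B → A #_S B`. -/
def inrHom (hg : Function.Injective g) (hh : Function.Injective h) :
    B.G →g (obj g h).G where
  toFun := mkr g h
  map_rel' := fun {a b} hab =>
    show adj g h (mkr g h a) (mkr g h b) from
    ⟨fun e => hab.ne (mkr_inj g h hg hh e), Or.inr ⟨a, b, hab, rfl, rfl⟩⟩

lemma inlHom_inj (hg : Function.Injective g) (hh : Function.Injective h) :
    Function.Injective (inlHom g h hg hh) := mkl_inj g h hh

lemma inrHom_inj (hg : Function.Injective g) (hh : Function.Injective h) :
    Function.Injective (inrHom g h hg hh) := mkr_inj g h hg hh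

end Glue

/-- The complete graph `K n` on vertex set `Fin n`. -/
abbrev KG (n : ℕ) : FinGraph := ⟨Fin n, (⊤ : SimpleGraph (Fin n))⟩
/-- `Graph_mono`: the category of finite simple graphs and injective graph
homomorphisms. -/
instance : Category.{0, 1} FinGraph where
  Hom A B := {f : A.G →g B.G // Function.Injective f}
  id A := ⟨SimpleGraph.Hom.id, fun _ _ e => e⟩
  comp f g := ⟨g.1.comp f.1, fun _ _ e => f.2 (g.2 e)⟩

/-- The spine data of `Graph_mono`: spine `n ↦ K n` and proxy pushouts given by
clique sums along complete graphs. -/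
def GraphSpine : SpineData FinGraph where
  Ω n := KG n
  P {_ _ _} g h := Glue.obj g.1 h.1
  inl {_ _ _} g h := ⟨Glue.inlHom g.1 h.1 g.2 h.2, Glue.inlHom_inj g.1 h.1 g.2 h.2⟩
  inr {_ _ _} g h := ⟨Glue.inrHom g.1 h.1 g.2 h.2, Glue.inrHom_inj g.1 h.1 g.2 h.2⟩

/-- The clique number: the largest `n` such that there is an injective graph
homomorphism `K n → A`. -/
noncomputable def cliqueNum (A : FinGraph) : ℕ := sSup {n : ℕ | Nonempty (KG n ⟶ A)}

/-!
A clique of a clique sum `A #_{K n} B` lies entirely on one side. If one of its vertices is not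
in `A`, it is a vertex of `B` outside the glued part, so all its neighbours lie in `B`. And two
vertices of one side that are adjacent in the sum are already adjacent on that side: an edge of
the other side joining them lies in the glued `K n`, which is complete on both sides.
-/

lemma SimpleGraph.top_adj_of_adj_map {V W : Type*} {G : SimpleGraph W}
    (f : (⊤ : SimpleGraph V) →g G) {v w : V} (hvw : G.Adj (f v) (f w)) :
    (⊤ : SimpleGraph V).Adj v w :=
  (SimpleGraph.top_adj v w).2 (ne_of_apply_ne f hvw.ne)

lemma le_card_of_hom {m : ℕ} {A : FinGraph} (f : KG m ⟶ A) : m ≤ Nat.card A.V := by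
  simpa using Nat.card_le_card_of_injective f.1 f.2

lemma bddAbove_setOf_nonempty_hom (A : FinGraph) : BddAbove {m | Nonempty (KG m ⟶ A)} :=
  ⟨Nat.card A.V, fun _ ⟨f⟩ => le_card_of_hom f⟩

lemma le_cliqueNum {m : ℕ} {A : FinGraph} (f : KG m ⟶ A) : m ≤ cliqueNum A :=
  le_csSup (bddAbove_setOf_nonempty_hom A) ⟨f⟩

lemma nonempty_hom_cliqueNum (A : FinGraph) : Nonempty (KG (cliqueNum A) ⟶ A) :=
  Nat.sSup_mem (s := {m | Nonempty (KG m ⟶ A)})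
    ⟨0, ⟨⟨⟨Fin.elim0, fun {a} => a.elim0⟩, fun a => a.elim0⟩⟩⟩
    (bddAbove_setOf_nonempty_hom A)

lemma cliqueNum_mono {X Y : FinGraph} (f : X ⟶ Y) : cliqueNum X ≤ cliqueNum Y :=
  (nonempty_hom_cliqueNum X).elim fun c => le_cliqueNum (c ≫ f)

lemma cliqueNum_KG (n : ℕ) : cliqueNum (KG n) = n := by
  obtain ⟨c⟩ := nonempty_hom_cliqueNum (KG n)
  exact le_antisymm (by simpa using le_card_of_hom c) (le_cliqueNum (𝟙 _))

lemma nonempty_hom_of_forall_mem_range {X Y A : FinGraph} (f : X ⟶ Y) (φ : A.V → Y.V)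
    (hφ : ∀ a a', Y.G.Adj (φ a) (φ a') → A.G.Adj a a') (hf : ∀ x, f.1 x ∈ Set.range φ) :
    Nonempty (X ⟶ A) := by
  choose a ha using hf
  refine ⟨⟨⟨a, fun hxy => hφ _ _ ?_⟩, fun x y e => f.2 ?_⟩⟩
  · rw [ha, ha]
    exact f.1.map_rel hxy
  · rw [← ha, ← ha]
    exact congrArg φ e

namespace Glue

section

variable {S A B : FinGraph} (g : S.G →g A.G) (h : S.G →g B.G)

lemma exists_eq_of_mkl_eq_mkr (hh : Function.Injective h) {a : A.V} {b : B.V}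
    (e : mkl g h a = mkr g h b) : ∃ s, g s = a ∧ h s = b := by
  have hn := norm_eqvGen g h hh (Quot.eq.1 e)
  by_cases hb : ∃ s, h s = b
  · simp only [norm, dif_pos hb, Sum.inl.injEq] at hn
    exact ⟨Classical.choose hb, hn.symm, Classical.choose_spec hb⟩
  · simp [norm, dif_neg hb] at hn

lemma mem_range_mkl_or_mem_range_mkr (x : GV g h) :
    x ∈ Set.range (mkl g h) ∨ x ∈ Set.range (mkr g h) := by
  obtain ⟨x | x, rfl⟩ := Quot.exists_rep x
  exacts [Or.inl ⟨x, rfl⟩, Or.inr ⟨x, rfl⟩]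

lemma mem_range_mkr_of_adj {x y : GV g h} (hx : x ∉ Set.range (mkl g h))
    (hxy : (graph g h).Adj x y) : y ∈ Set.range (mkr g h) := by
  obtain ⟨-, ⟨a, -, -, rfl, -⟩ | ⟨-, b, -, -, rfl⟩⟩ := hxy
  exacts [absurd ⟨a, rfl⟩ hx, ⟨b, rfl⟩]

lemma adj_of_adj_mkl (hh : Function.Injective h)
    (h_refl : ∀ s s', B.G.Adj (h s) (h s') → S.G.Adj s s') {a a' : A.V}
    (hadj : (graph g h).Adj (mkl g h a) (mkl g h a')) : A.G.Adj a a' := by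
  obtain ⟨-, ⟨x, y, hxy, hx, hy⟩ | ⟨x, y, hxy, hx, hy⟩⟩ := hadj
  · rwa [mkl_inj g h hh hx, mkl_inj g h hh hy]
  · obtain ⟨s, rfl, rfl⟩ := exists_eq_of_mkl_eq_mkr g h hh hx
    obtain ⟨s', rfl, rfl⟩ := exists_eq_of_mkl_eq_mkr g h hh hy
    exact g.map_rel (h_refl s s' hxy)

lemma adj_of_adj_mkr (hg : Function.Injective g) (hh : Function.Injective h)
    (g_refl : ∀ s s', A.G.Adj (g s) (g s') → S.G.Adj s s') {b b' : B.V}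
    (hadj : (graph g h).Adj (mkr g h b) (mkr g h b')) : B.G.Adj b b' := by
  obtain ⟨-, ⟨x, y, hxy, hx, hy⟩ | ⟨x, y, hxy, hx, hy⟩⟩ := hadj
  · obtain ⟨s, rfl, rfl⟩ := exists_eq_of_mkl_eq_mkr g h hh hx.symm
    obtain ⟨s', rfl, rfl⟩ := exists_eq_of_mkl_eq_mkr g h hh hy.symm
    exact h.map_rel (g_refl s s' hxy)
  · rwa [mkr_inj g h hg hh hx, mkr_inj g h hg hh hy]

end

section

variable {n : ℕ} {A B : FinGraph} (g : (KG n).G →g A.G) (h : (KG n).G →g B.G)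

lemma nonempty_hom_or_nonempty_hom (hg : Function.Injective g) (hh : Function.Injective h)
    {m : ℕ} (f : KG m ⟶ obj g h) : Nonempty (KG m ⟶ A) ∨ Nonempty (KG m ⟶ B) := by
  by_cases hA : ∀ i, f.1 i ∈ Set.range (mkl g h)
  · exact .inl <| nonempty_hom_of_forall_mem_range f _
      (fun _ _ => adj_of_adj_mkl g h hh fun _ _ => SimpleGraph.top_adj_of_adj_map h) hA
  · push Not at hA
    obtain ⟨i₀, hi₀⟩ := hA
    refine .inr <| nonempty_hom_of_forall_mem_range f _
      (fun _ _ => adj_of_adj_mkr g h hg hh fun _ _ => SimpleGraph.top_adj_of_adj_map g)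
      fun i => ?_
    rcases eq_or_ne i₀ i with rfl | hne
    · exact (mem_range_mkl_or_mem_range_mkr g h _).resolve_left hi₀
    · exact mem_range_mkr_of_adj g h hi₀ (f.1.map_rel ((SimpleGraph.top_adj _ _).2 hne))

lemma cliqueNum_obj (hg : Function.Injective g) (hh : Function.Injective h) :
    cliqueNum (obj g h) = max (cliqueNum A) (cliqueNum B) := by
  refine le_antisymm ?_ (max_le (cliqueNum_mono ⟨inlHom g h hg hh, inlHom_inj g h hg hh⟩)
    (cliqueNum_mono ⟨inrHom g h hg hh, inrHom_inj g h hg hh⟩))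
  obtain ⟨c⟩ := nonempty_hom_cliqueNum (obj g h)
  rcases nonempty_hom_or_nonempty_hom g h hg hh c with ⟨⟨cA⟩⟩ | ⟨⟨cB⟩⟩
  exacts [le_max_of_le_left (le_cliqueNum cA), le_max_of_le_right (le_cliqueNum cB)]

end

end Glue

/-- the clique number is an S-functor over `Graph_mono` (monotone along
injective homomorphisms, `ω (K n) = n`, and distributing over clique sums along
complete graphs as maxima); consequently `Graph_mono` is measurable. -/
theorem cliqueNum_is_SFunctor :
    (∀ {X Y : FinGraph}, (X ⟶ Y) → cliqueNum X ≤ cliqueNum Y) ∧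
    (∀ n : ℕ, cliqueNum (KG n) = n) ∧
    (∀ {n : ℕ} {A B : FinGraph} (g : KG n ⟶ A) (h : KG n ⟶ B),
      cliqueNum (GraphSpine.P g h) = max (cliqueNum A) (cliqueNum B)) ∧
    Nonempty (SFunctor GraphSpine) :=
  let ω : SFunctor GraphSpine :=
    ⟨cliqueNum, cliqueNum_mono, cliqueNum_KG, fun g h => Glue.cliqueNum_obj g.1 h.1 g.2 h.2⟩
  ⟨ω.mono, ω.spine, ω.pp, ⟨ω⟩⟩
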